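/- There exists a robust newsvendor game with three players whose core is empty: with N = {1,2,3}, N_1 = {1,2}, N_2 = {3}, d̃_1 ~ U(0,D), d̃_2 = D − d̃_1, d̃_3 ~ U(0,D), 0 < c < p, and D > 0, one has v_max(y,{1,2}) = 2p/(3p−c) and v_max(y,{1,3}), v_max(y,{2,3}) ≥ 2p/(3p−c) for y = y*_wc(N), so that v_max(y,{1,2}) + v_max(y,{1,3}) + v_max(y,{2,3}) ≥ 6p/(3p−c) > 2, contradicting existence of z with Σ z_i = 1 and Σ_{i∈S} z_i ≥ v_max(y,S) for all two-player S. -/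

import Mathlib

open MeasureTheory

/-- Uniform distribution on `(0, D)`. -/
noncomputable def unif (D : ℝ) : Measure ℝ :=
  (ENNReal.ofReal D)⁻¹ • volume.restrict (Set.Ioo 0 D)

/-- Expected newsvendor profit of coalition `S ⊆ {1,2,3}` under joint law `μ`, order `y`. -/
noncomputable def vP3 (p c : ℝ) (μ : Measure (Fin 3 → ℝ)) (y : ℝ) (S : Finset (Fin 3)) : ℝ :=
  (p - c) * y - p * ∫ d, max (y - ∑ i ∈ S, d i) 0 ∂μ

/-- Fréchet class for Example 1: `(d̃_1, d̃_2)` perfectly negatively correlated uniforms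
summing to `D`, and `d̃_3 ~ U(0,D)`. -/
def frechet3 (D : ℝ) : Set (Measure (Fin 3 → ℝ)) :=
  {μ | IsProbabilityMeasure μ ∧
    μ.map (fun d => (d 0, d 1)) = (unif D).map (fun t => (t, D - t)) ∧
    μ.map (fun d => d 2) = unif D}

/-- `v_max(y,S) = max_{P ∈ P(P_1,P_2)} (max_{γ ≥ 0} v_P(γ,S)) / v_P(y,N)`. -/
noncomputable def vmax3 (p c D y : ℝ) (S : Finset (Fin 3)) : ℝ :=
  ⨆ μ : frechet3 D, (⨆ γ : {γ : ℝ // 0 ≤ γ}, vP3 p c μ.1 γ.1 S) / vP3 p c μ.1 y Finset.univ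

/-!
Every law in the Fréchet class has `d̃_1 + d̃_2 = D` almost surely and `d̃_3 ~ U(0,D)`, so at
`y = D(2p-c)/p` the grand coalition earns `D(p-c)(3p-c)/(2p)` under all of them. A coalition whose
total demand is almost surely the constant `D` earns at most `D(p-c)`, by ordering exactly `D`, which
gives the ratio `2p/(3p-c)`. This is the case for `{1,2}` under every law, for `{2,3}` under the
coupling `d̃_3 = d̃_1` and for `{1,3}` under `d̃_3 = d̃_2`. Summing the three two-player core
constraints then gives `2 = 2 ∑ z_i ≥ 6p/(3p-c) > 2`.
-/

open Set

lemma isProbabilityMeasure_unif {D : ℝ} (hD : 0 < D) : IsProbabilityMeasure (unif D) := by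
  constructor
  rw [unif, Measure.smul_apply, Measure.restrict_apply MeasurableSet.univ]
  simp [Real.volume_Ioo, ENNReal.inv_mul_cancel, (ENNReal.ofReal_pos.mpr hD).ne']

lemma ae_unif_mem_Ioo (D : ℝ) : ∀ᵐ t ∂unif D, t ∈ Ioo 0 D :=
  Measure.ae_smul_measure (ae_restrict_mem measurableSet_Ioo) _

lemma integral_unif {D : ℝ} (hD : 0 < D) (f : ℝ → ℝ) :
    ∫ t, f t ∂unif D = D⁻¹ * ∫ t in 0..D, f t := by
  rw [unif, integral_smul_measure, ← integral_Ioc_eq_integral_Ioo,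
    ← intervalIntegral.integral_of_le hD.le, smul_eq_mul, ENNReal.toReal_inv,
    ENNReal.toReal_ofReal hD.le]

lemma integral_unif_max_sub {D a : ℝ} (hD : 0 < D) (ha : 0 ≤ a) (haD : a ≤ D) :
    ∫ t, max (a - t) 0 ∂unif D = a ^ 2 / (2 * D) := by
  have hf : Continuous fun t : ℝ => max (a - t) 0 := by fun_prop
  have hleft : ∫ t in 0..a, max (a - t) 0 = a ^ 2 / 2 := by
    rw [intervalIntegral.integral_congr (g := fun t => a - t) fun t ht => by
      rw [uIcc_of_le ha] at ht; exact max_eq_left (by linarith [ht.2])]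
    simp [intervalIntegral.integral_comp_sub_left (fun x => x)]
  have hright : ∫ t in a..D, max (a - t) 0 = 0 := by
    rw [intervalIntegral.integral_congr (g := fun _ => (0 : ℝ)) fun t ht => by
      rw [uIcc_of_le haD] at ht; exact max_eq_right (by linarith [ht.1])]
    simp
  rw [integral_unif hD, ← intervalIntegral.integral_add_adjacent_intervals
    (hf.intervalIntegrable 0 a) (hf.intervalIntegrable a D), hleft, hright]
  field_simp
  ring

lemma map_unif_sub_self (D : ℝ) : (unif D).map (fun t => D - t) = unif D := by
  have hpre : (fun t : ℝ => D - t) ⁻¹' Ioo 0 D = Ioo 0 D := by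
    ext t
    simp only [mem_preimage, mem_Ioo]
    constructor <;> intro h <;> constructor <;> linarith [h.1, h.2]
  rw [unif, Measure.map_smul, ← hpre, ← Measure.restrict_map (by fun_prop) measurableSet_Ioo,
    hpre, Measure.map_sub_left_eq_self]

lemma ae_of_map_eq_map {α β γ : Type*} [MeasurableSpace α] [MeasurableSpace β]
    [MeasurableSpace γ] {μ : Measure α} {ν : Measure β} {f : α → γ} {g : β → γ}
    (hf : Measurable f) (hg : Measurable g) (h : μ.map f = ν.map g) {P : γ → Prop}
    (hP : MeasurableSet {x | P x}) (hν : ∀ᵐ b ∂ν, P (g b)) : ∀ᵐ a ∂μ, P (f a) := by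
  rwa [← ae_map_iff hf.aemeasurable hP, h, ae_map_iff hg.aemeasurable hP]

namespace frechet3

variable {D : ℝ} {μ : Measure (Fin 3 → ℝ)}

lemma ae_zero_mem_Ioo_and_add (hμ : μ ∈ frechet3 D) :
    ∀ᵐ d ∂μ, d 0 ∈ Ioo 0 D ∧ d 0 + d 1 = D :=
  ae_of_map_eq_map (P := fun q : ℝ × ℝ => q.1 ∈ Ioo 0 D ∧ q.1 + q.2 = D)
    (by fun_prop) (by fun_prop) hμ.2.1 (by measurability)
    ((ae_unif_mem_Ioo D).mono fun t ht => ⟨ht, add_sub_cancel t D⟩)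

lemma ae_add (hμ : μ ∈ frechet3 D) : ∀ᵐ d ∂μ, d 0 + d 1 = D :=
  (ae_zero_mem_Ioo_and_add hμ).mono fun _ hd => hd.2

lemma ae_mem_Icc (hμ : μ ∈ frechet3 D) : ∀ᵐ d ∂μ, ∀ i, d i ∈ Icc 0 D := by
  have h2 : ∀ᵐ d ∂μ, d 2 ∈ Ioo 0 D :=
    (ae_map_iff (measurable_pi_apply 2).aemeasurable measurableSet_Ioo).mp
      (hμ.2.2 ▸ ae_unif_mem_Ioo D)
  filter_upwards [ae_zero_mem_Ioo_and_add hμ, h2] with d ⟨⟨h0, h0'⟩, h01⟩ ⟨h2, h2'⟩ i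
  fin_cases i <;> constructor <;> simp <;> linarith

lemma ae_sum_mem_Icc (hμ : μ ∈ frechet3 D) (S : Finset (Fin 3)) :
    ∀ᵐ d ∂μ, ∑ i ∈ S, d i ∈ Icc 0 (3 * D) := by
  filter_upwards [ae_mem_Icc hμ] with d hd
  refine ⟨Finset.sum_nonneg fun i _ => (hd i).1, ?_⟩
  calc ∑ i ∈ S, d i ≤ ∑ _i ∈ S, D := Finset.sum_le_sum fun i _ => (hd i).2
    _ ≤ 3 * D := by
      rw [Finset.sum_const, nsmul_eq_mul]
      have hD : 0 ≤ D := (hd 0).1.trans (hd 0).2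
      gcongr
      exact_mod_cast S.card_le_univ.trans_eq (Fintype.card_fin 3)

end frechet3

noncomputable def coupling3 (D : ℝ) (f : ℝ → ℝ) : Measure (Fin 3 → ℝ) :=
  (unif D).map fun t => ![t, D - t, f t]

section coupling3

variable {D : ℝ} {f : ℝ → ℝ}

lemma measurable_coupling3_map (hf : Measurable f) :
    Measurable fun t : ℝ => ![t, D - t, f t] := by
  refine measurable_pi_iff.mpr fun i => ?_
  fin_cases i <;> simp <;> fun_prop

lemma coupling3_mem_frechet3 (hD : 0 < D) (hf : Measurable f)
    (hfD : (unif D).map f = unif D) : coupling3 D f ∈ frechet3 D := by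
  have := isProbabilityMeasure_unif hD
  have hm := measurable_coupling3_map (D := D) hf
  refine ⟨Measure.isProbabilityMeasure_map hm.aemeasurable, ?_, ?_⟩
  · rw [coupling3, Measure.map_map (by fun_prop) hm]
    rfl
  · rwa [coupling3, Measure.map_map (measurable_pi_apply 2) hm]

lemma ae_sum_coupling3 (hf : Measurable f) {S : Finset (Fin 3)}
    (hS : ∀ t, ∑ i ∈ S, ![t, D - t, f t] i = D) :
    ∀ᵐ d ∂coupling3 D f, ∑ i ∈ S, d i = D :=
  (ae_map_iff (measurable_coupling3_map hf).aemeasurable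
    ((Finset.measurable_sum S fun i _ => measurable_pi_apply i) (measurableSet_singleton D))).mpr
    (ae_of_all _ hS)

end coupling3

def newsvendorProfit (p c a γ : ℝ) : ℝ := (p - c) * γ - p * max (γ - a) 0

section newsvendorProfit

variable {p c a γ : ℝ}

lemma newsvendorProfit_le (hc : 0 ≤ c) (hcp : c ≤ p) :
    newsvendorProfit p c a γ ≤ (p - c) * a := by
  rw [newsvendorProfit]
  rcases le_total γ a with h | h
  · rw [max_eq_right (by linarith)]
    nlinarith
  · rw [max_eq_left (by linarith)]
    nlinarith

lemma newsvendorProfit_self : newsvendorProfit p c a a = (p - c) * a := by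
  simp [newsvendorProfit]

end newsvendorProfit

section vP3

variable {p c a γ : ℝ} {μ : Measure (Fin 3 → ℝ)} [IsProbabilityMeasure μ]
  {S : Finset (Fin 3)}

lemma vP3_eq_of_ae_sum_eq (h : ∀ᵐ d ∂μ, ∑ i ∈ S, d i = a) :
    vP3 p c μ γ S = newsvendorProfit p c a γ := by
  rw [vP3, newsvendorProfit, integral_congr_ae (h.mono fun d hd => by rw [hd]), integral_const]
  simp

lemma vP3_le_of_ae_sum_mem_Icc (hp : 0 ≤ p) (h : ∀ᵐ d ∂μ, ∑ i ∈ S, d i ∈ Icc 0 a) :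
    vP3 p c μ γ S ≤ newsvendorProfit p c a γ := by
  have hmeas : Measurable fun d : Fin 3 → ℝ => max (γ - ∑ i ∈ S, d i) 0 := by fun_prop
  have hint : Integrable (fun d : Fin 3 → ℝ => max (γ - ∑ i ∈ S, d i) 0) μ :=
    .of_bound hmeas.aestronglyMeasurable |γ| <| h.mono fun d hd => by
      rw [Real.norm_of_nonneg (le_max_right _ _)]
      exact max_le (by linarith [hd.1, le_abs_self γ]) (abs_nonneg γ)
  have hmono : max (γ - a) 0 ≤ ∫ d, max (γ - ∑ i ∈ S, d i) 0 ∂μ := by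
    simpa using integral_mono_ae (integrable_const (max (γ - a) 0)) hint
      (h.mono fun d hd => max_le_max_right 0 (by linarith [hd.2]))
  rw [vP3, newsvendorProfit]
  nlinarith

lemma iSup_vP3_eq_of_ae_sum_eq (hc : 0 ≤ c) (hcp : c ≤ p) (ha : 0 ≤ a)
    (h : ∀ᵐ d ∂μ, ∑ i ∈ S, d i = a) :
    ⨆ γ : {γ : ℝ // 0 ≤ γ}, vP3 p c μ γ.1 S = (p - c) * a := by
  simp_rw [vP3_eq_of_ae_sum_eq h]
  refine le_antisymm (ciSup_le fun γ => newsvendorProfit_le hc hcp) ?_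
  exact le_ciSup_of_le
    ⟨(p - c) * a, by rintro _ ⟨γ, rfl⟩; exact newsvendorProfit_le hc hcp⟩
    ⟨a, ha⟩ newsvendorProfit_self.ge

lemma iSup_vP3_le_of_ae_sum_mem_Icc (hc : 0 ≤ c) (hcp : c ≤ p)
    (h : ∀ᵐ d ∂μ, ∑ i ∈ S, d i ∈ Icc 0 a) :
    ⨆ γ : {γ : ℝ // 0 ≤ γ}, vP3 p c μ γ.1 S ≤ (p - c) * a :=
  ciSup_le fun _ =>
    (vP3_le_of_ae_sum_mem_Icc (hc.trans hcp) h).trans (newsvendorProfit_le hc hcp)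

end vP3

lemma vP3_univ_of_mem_frechet3 {p c D : ℝ} {μ : Measure (Fin 3 → ℝ)} (hc : 0 ≤ c)
    (hcp : c < p) (hD : 0 < D) (hμ : μ ∈ frechet3 D) :
    vP3 p c μ (D * (2 * p - c) / p) Finset.univ = D * (p - c) * (3 * p - c) / (2 * p) := by
  have hp : 0 < p := hc.trans_lt hcp
  obtain ⟨a, ha_def⟩ : ∃ a, a = D * (p - c) / p := ⟨_, rfl⟩
  have hy : D * (2 * p - c) / p = D + a := by rw [ha_def]; field_simp; ring
  have ha : 0 ≤ a := by rw [ha_def]; exact div_nonneg (mul_nonneg hD.le (by linarith)) hp.le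
  have haD : a ≤ D := by rw [ha_def, div_le_iff₀ hp]; nlinarith
  have hshift :
      ∫ d, max (D * (2 * p - c) / p - ∑ i, d i) 0 ∂μ = ∫ d, max (a - d 2) 0 ∂μ :=
    integral_congr_ae <| (frechet3.ae_add hμ).mono fun d hd => by
      simp only [Fin.sum_univ_three, hy]
      congr 1
      linarith
  have hmarg : ∫ d, max (a - d 2) 0 ∂μ = ∫ t, max (a - t) 0 ∂unif D := by
    rw [← hμ.2.2, integral_map (measurable_pi_apply 2).aemeasurable (by fun_prop)]
  rw [vP3, hshift, hmarg, integral_unif_max_sub hD ha haD, hy, ha_def]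
  field_simp
  ring

noncomputable def vRatio3 (p c : ℝ) (μ : Measure (Fin 3 → ℝ)) (y : ℝ)
    (S : Finset (Fin 3)) : ℝ :=
  (⨆ γ : {γ : ℝ // 0 ≤ γ}, vP3 p c μ γ.1 S) / vP3 p c μ y Finset.univ

lemma vmax3_eq_iSup_vRatio3 (p c D y : ℝ) (S : Finset (Fin 3)) :
    vmax3 p c D y S = ⨆ μ : frechet3 D, vRatio3 p c μ.1 y S := rfl

section vRatio3

variable {p c D : ℝ} {μ : Measure (Fin 3 → ℝ)} {S : Finset (Fin 3)}

lemma vRatio3_eq_of_ae_sum_eq (hc : 0 ≤ c) (hcp : c < p) (hD : 0 < D) (hμ : μ ∈ frechet3 D)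
    (hS : ∀ᵐ d ∂μ, ∑ i ∈ S, d i = D) :
    vRatio3 p c μ (D * (2 * p - c) / p) S = 2 * p / (3 * p - c) := by
  have := hμ.1
  rw [vRatio3, iSup_vP3_eq_of_ae_sum_eq hc hcp.le hD.le hS,
    vP3_univ_of_mem_frechet3 hc hcp hD hμ]
  have : p - c ≠ 0 := by linarith
  field_simp

-- Keeps `vmax3` a genuine supremum: `⨆` of a family unbounded above is `0`.
lemma vRatio3_le (hc : 0 ≤ c) (hcp : c < p) (hD : 0 < D) (hμ : μ ∈ frechet3 D) :
    vRatio3 p c μ (D * (2 * p - c) / p) S ≤ 6 * p / (3 * p - c) := by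
  have := hμ.1
  have hp : p ≠ 0 := (hc.trans_lt hcp).ne'
  have h3pc : 3 * p - c ≠ 0 := by linarith
  have hwc : 0 < D * (p - c) * (3 * p - c) / (2 * p) :=
    div_pos (mul_pos (mul_pos hD (by linarith)) (by linarith)) (by linarith)
  rw [vRatio3, vP3_univ_of_mem_frechet3 hc hcp hD hμ, div_le_iff₀ hwc]
  calc ⨆ γ : {γ : ℝ // 0 ≤ γ}, vP3 p c μ γ.1 S
      ≤ (p - c) * (3 * D) :=
        iSup_vP3_le_of_ae_sum_mem_Icc hc hcp.le (frechet3.ae_sum_mem_Icc hμ S)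
    _ = 6 * p / (3 * p - c) * (D * (p - c) * (3 * p - c) / (2 * p)) := by
      rw [div_mul_div_comm, eq_div_iff (mul_ne_zero h3pc (by simpa using hp))]
      ring

lemma le_vmax3 (hc : 0 ≤ c) (hcp : c < p) (hD : 0 < D) (hμ : μ ∈ frechet3 D)
    (hS : ∀ᵐ d ∂μ, ∑ i ∈ S, d i = D) :
    2 * p / (3 * p - c) ≤ vmax3 p c D (D * (2 * p - c) / p) S := by
  rw [vmax3_eq_iSup_vRatio3, ← vRatio3_eq_of_ae_sum_eq hc hcp hD hμ hS]
  exact le_ciSup (f := fun μ : frechet3 D => vRatio3 p c μ.1 _ S)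
    ⟨_, by rintro _ ⟨ν, rfl⟩; exact vRatio3_le hc hcp hD ν.2⟩ ⟨μ, hμ⟩

lemma vmax3_eq_of_forall_ae_sum_eq (hc : 0 ≤ c) (hcp : c < p) (hD : 0 < D)
    (hS : ∀ μ ∈ frechet3 D, ∀ᵐ d ∂μ, ∑ i ∈ S, d i = D) :
    vmax3 p c D (D * (2 * p - c) / p) S = 2 * p / (3 * p - c) := by
  have : Nonempty (frechet3 D) := ⟨_, coupling3_mem_frechet3 hD measurable_id Measure.map_id⟩
  have hconst (μ : frechet3 D) :
      vRatio3 p c μ.1 (D * (2 * p - c) / p) S = 2 * p / (3 * p - c) :=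
    vRatio3_eq_of_ae_sum_eq hc hcp hD μ.2 (hS μ μ.2)
  simp only [vmax3_eq_iSup_vRatio3, hconst, ciSup_const]

end vRatio3

lemma not_exists_core_of_two_lt (v : Finset (Fin 3) → ℝ)
    (hv : 2 < v {0, 1} + v {0, 2} + v {1, 2}) :
    ¬ ∃ z : Fin 3 → ℝ, ∑ i, z i = 1 ∧
      ∀ S : Finset (Fin 3), S.card = 2 → v S ≤ ∑ i ∈ S, z i := by
  rintro ⟨z, hz, hcore⟩
  have h01 := hcore {0, 1} rfl
  have h02 := hcore {0, 2} rfl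
  have h12 := hcore {1, 2} rfl
  simp only [Fin.sum_univ_three] at hz
  simp only [Finset.sum_pair (by decide : (0 : Fin 3) ≠ 1),
    Finset.sum_pair (by decide : (0 : Fin 3) ≠ 2),
    Finset.sum_pair (by decide : (1 : Fin 3) ≠ 2)] at h01 h02 h12
  linarith

/-- A three–player robust newsvendor game with empty core: at `y = y*_wc(N) = D(2p-c)/p`,
`v_max(y,{1,2}) = 2p/(3p-c)`, `v_max(y,{1,3}), v_max(y,{2,3}) ≥ 2p/(3p-c)`, and
`6p/(3p-c) > 2`, so no efficient `z` can satisfy all two-player coalition constraints. -/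
theorem stmt_14 (p c D : ℝ) (hc : 0 < c) (hcp : c < p) (hD : 0 < D) :
    vmax3 p c D (D * (2 * p - c) / p) {0, 1} = 2 * p / (3 * p - c) ∧
    2 * p / (3 * p - c) ≤ vmax3 p c D (D * (2 * p - c) / p) {0, 2} ∧
    2 * p / (3 * p - c) ≤ vmax3 p c D (D * (2 * p - c) / p) {1, 2} ∧
    2 < 6 * p / (3 * p - c) ∧
    ¬ ∃ z : Fin 3 → ℝ, (∑ i, z i) = 1 ∧
        ∀ S : Finset (Fin 3), S.card = 2 →
          vmax3 p c D (D * (2 * p - c) / p) S ≤ ∑ i ∈ S, z i := by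
  have h01 := vmax3_eq_of_forall_ae_sum_eq (S := {0, 1}) hc.le hcp hD fun μ hμ =>
    (frechet3.ae_add hμ).mono fun d hd => by simpa using hd
  have h02 := le_vmax3 (S := {0, 2}) hc.le hcp hD
    (coupling3_mem_frechet3 hD (by fun_prop) (map_unif_sub_self D))
    (ae_sum_coupling3 (by fun_prop) fun t => by simp)
  have h12 := le_vmax3 (S := {1, 2}) hc.le hcp hD
    (coupling3_mem_frechet3 hD measurable_id Measure.map_id)
    (ae_sum_coupling3 measurable_id fun t => by simp)
  have h6 : 2 < 6 * p / (3 * p - c) := by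
    rw [lt_div_iff₀ (by linarith)]
    linarith
  refine ⟨h01, h02, h12, h6, not_exists_core_of_two_lt _ ?_⟩
  have : 6 * p / (3 * p - c) = 3 * (2 * p / (3 * p - c)) := by ring
  linarith
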